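/- arXiv:1608.02682 — 4 statements merged into one kernel-verified Lean document; each statement's English description precedes it below -/
import Mathlib

section
/- Let d' : X → Finset X → ℝ be any function satisfying the recursion d'(x, ∅) = s(x, ∅) and, for every nonempty U, d'(x, U) = min( s(x, U), min over y ∈ U of d'(x, U \ {y}) ). Then for every variable x and every finite set U of variables, d'(x, U) equals the minimum of s(x, W) over all subsets W ⊆ U. -/
/-!
A subset of `U` is either `U` itself or a subset of some `U \ {y}` with `y ∈ U`, so the
minimum over subsets satisfies the same recursion as `d'`; the two then agree by strong
induction on `U`.
-/

/-- `d s x U` : the score of selecting optimal parents of `x` from `U`,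
defined as the minimum of `s x W` over all subsets `W ⊆ U`. -/
noncomputable def d {X : Type*} [DecidableEq X] (s : X → Finset X → ℝ)
    (x : X) (U : Finset X) : ℝ :=
  U.powerset.inf' (Finset.powerset_nonempty U) (s x)

namespace Finset

variable {X : Type*} [DecidableEq X]

theorem subset_iff_eq_or_exists_subset_erase {W U : Finset X} :
    W ⊆ U ↔ W = U ∨ ∃ y ∈ U, W ⊆ U.erase y := by
  constructor
  · intro hWU
    refine (eq_or_ne W U).imp_right fun hne => ?_
    obtain ⟨y, hyU, hyW⟩ := exists_of_ssubset (hWU.ssubset_of_ne hne)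
    exact ⟨y, hyU, subset_erase.mpr ⟨hWU, hyW⟩⟩
  · rintro (rfl | ⟨y, -, hW⟩)
    · exact Subset.rfl
    · exact hW.trans (erase_subset y U)

end Finset

section OptimalParents

variable {X : Type*} [DecidableEq X] (s : X → Finset X → ℝ) (x : X)

theorem le_d_iff {a : ℝ} {U : Finset X} : a ≤ d s x U ↔ ∀ W ⊆ U, a ≤ s x W := by
  simp only [d, Finset.le_inf'_iff, Finset.mem_powerset]

theorem d_empty : d s x ∅ = s x ∅ := by
  simp [d]

theorem d_eq_min_inf'_erase (U : Finset X) (hU : U.Nonempty) :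
    d s x U = min (s x U) (U.inf' hU fun y => d s x (U.erase y)) := by
  refine eq_of_forall_le_iff fun a => ?_
  simp only [le_min_iff, Finset.le_inf'_iff, le_d_iff,
    Finset.subset_iff_eq_or_exists_subset_erase (U := U), or_imp, forall_and, forall_eq,
    forall_exists_index, and_imp]
  exact and_congr_right' ⟨fun h y hy W => h W y hy, fun h W y hy => h y hy W⟩

end OptimalParents

theorem d_recursion_eq_min_over_subsets_general
    {X : Type*} [DecidableEq X]
    (s : X → Finset X → ℝ) (d' : X → Finset X → ℝ)
    (h0 : ∀ x : X, d' x ∅ = s x ∅)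
    (h1 : ∀ (x : X) (U : Finset X) (hU : U.Nonempty),
      d' x U = min (s x U) (U.inf' hU (fun y => d' x (U.erase y)))) :
    ∀ (x : X) (U : Finset X), d' x U = d s x U := by
  intro x U
  induction U using Finset.strongInduction with
  | H U ih =>
    rcases U.eq_empty_or_nonempty with rfl | hU
    · rw [h0, d_empty]
    · rw [h1 x U hU, d_eq_min_inf'_erase s x U hU]
      congr 1
      exact Finset.inf'_congr hU rfl fun y hy => ih _ (Finset.erase_ssubset hy)

/-- Any function `d'` satisfying the recursion
`d'(x, ∅) = s(x, ∅)` and, for nonempty `U`,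
`d'(x, U) = min (s(x, U)) (min_{y ∈ U} d'(x, U \ {y}))`
equals the minimum of `s(x, W)` over all subsets `W ⊆ U`. -/
theorem d_recursion_eq_min_over_subsets
    {X : Type*} [Fintype X] [DecidableEq X] [Nonempty X]
    (s : X → Finset X → ℝ) (d' : X → Finset X → ℝ)
    (h0 : ∀ x : X, d' x ∅ = s x ∅)
    (h1 : ∀ (x : X) (U : Finset X) (hU : U.Nonempty),
      d' x U = min (s x U) (U.inf' hU (fun y => d' x (U.erase y)))) :
    ∀ (x : X) (U : Finset X), d' x U = d s x U :=
  d_recursion_eq_min_over_subsets_general s d' h0 h1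
end

section
/- For every variable x and every finite set U of variables, there exists a subset W ⊆ U that is a maximal candidate parents set for x and satisfies d(x, U) = s(x, W). Consequently, d(x, U) equals the minimum of s(x, W) taken over all maximal candidate parents sets W of x with W ⊆ U, so memoizing s only on maximal candidate parents sets suffices to answer all queries d(x, U). -/
section MaximalCandidates

variable {X : Type*} [DecidableEq X] (s : X → Finset X → ℝ) (x : X)

def IsMaximalCandidate (W : Finset X) : Prop :=
  ∀ W' : Finset X, W' ⊂ W → d s x W < d s x W'

variable {s x}

lemma d_le_of_subset {W U : Finset X} (h : W ⊆ U) : d s x U ≤ s x W :=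
  Finset.inf'_le _ (Finset.mem_powerset.mpr h)

lemma d_anti {W U : Finset X} (h : W ⊆ U) : d s x U ≤ d s x W :=
  Finset.le_inf' _ _ fun _ hV => d_le_of_subset ((Finset.mem_powerset.mp hV).trans h)

lemma exists_subset_eq_d (U : Finset X) : ∃ W ⊆ U, s x W = d s x U := by
  obtain ⟨W, hW, hWd⟩ := Finset.exists_mem_eq_inf' (Finset.powerset_nonempty U) (s x)
  exact ⟨W, Finset.mem_powerset.mp hW, hWd.symm⟩

lemma d_eq_of_subset_of_eq_d {W U : Finset X} (hWU : W ⊆ U) (hW : s x W = d s x U) :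
    d s x W = d s x U :=
  le_antisymm (hW ▸ d_le_of_subset subset_rfl) (d_anti hWU)

lemma isMaximalCandidate_of_minimal {U W : Finset X}
    (hW : Minimal (fun V => V ⊆ U ∧ s x V = d s x U) W) : IsMaximalCandidate s x W := by
  obtain ⟨hWU, hWd⟩ := hW.prop
  intro W' hW'
  rw [d_eq_of_subset_of_eq_d hWU hWd]
  refine (d_anti (hW'.subset.trans hWU)).lt_of_ne fun hdW' => ?_
  obtain ⟨V, hVW', hVd⟩ := exists_subset_eq_d (s := s) (x := x) W'
  exact hW.not_prop_of_lt (hVW'.trans_ssubset hW')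
    ⟨hVW'.trans (hW'.subset.trans hWU), hVd.trans hdW'.symm⟩

lemma exists_isMaximalCandidate_eq_d (U : Finset X) :
    ∃ W ⊆ U, IsMaximalCandidate s x W ∧ d s x U = s x W := by
  obtain ⟨W, hW⟩ := exists_minimal_of_wellFoundedLT
    (fun V => V ⊆ U ∧ s x V = d s x U) (exists_subset_eq_d U)
  exact ⟨W, hW.prop.1, isMaximalCandidate_of_minimal hW, hW.prop.2.symm⟩

end MaximalCandidates

theorem d_eq_min_over_maximal_candidates_general
    {X : Type*} [DecidableEq X]
    (s : X → Finset X → ℝ) (x : X) (U : Finset X) :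
    (∃ W : Finset X, W ⊆ U ∧ (∀ W' : Finset X, W' ⊂ W → d s x W < d s x W') ∧
        d s x U = s x W) ∧
    (∀ W : Finset X, W ⊆ U → (∀ W' : Finset X, W' ⊂ W → d s x W < d s x W') →
        d s x U ≤ s x W) :=
  ⟨exists_isMaximalCandidate_eq_d U, fun _ hWU _ => d_le_of_subset hWU⟩

/-- For every `x` and `U` there is a maximal candidate parents set `W ⊆ U`
with `d x U = s x W`; consequently `d x U` is the minimum of `s x W` over
all maximal candidate parents sets `W` of `x` with `W ⊆ U`. -/
theorem d_eq_min_over_maximal_candidates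
    {X : Type*} [Fintype X] [DecidableEq X] [Nonempty X]
    (s : X → Finset X → ℝ) (x : X) (U : Finset X) :
    (∃ W : Finset X, W ⊆ U ∧ (∀ W' : Finset X, W' ⊂ W → d s x W < d s x W') ∧
        d s x U = s x W) ∧
    (∀ W : Finset X, W ⊆ U → (∀ W' : Finset X, W' ⊂ W → d s x W < d s x W') →
        d s x U ≤ s x W) :=
  d_eq_min_over_maximal_candidates_general s x U
end

section
/- Let x and y be distinct variables, and let U be a finite set of variables with x ∉ U and y ∉ U. If U is a superset of an optimal parents set of x, i.e. d(x, U) = d(x, univ \ {x}), then d(y, U) + d(x, U ∪ {y}) ≥ d(x, U) + d(y, U ∪ {x}). That is, placing x immediately after U in a topological ordering costs no more than placing y first and x second. -/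
section

variable {X : Type*} [DecidableEq X] (s : X → Finset X → ℝ) (x : X)

theorem d_antitone : Antitone (d s x) := fun _ _ hAB =>
  Finset.le_inf' _ _ fun _ hW =>
    Finset.inf'_le _ (Finset.mem_powerset.2 ((Finset.mem_powerset.1 hW).trans hAB))

theorem d_eq_of_subset_of_subset {U V W : Finset X} (hUV : U ⊆ V) (hVW : V ⊆ W)
    (h : d s x U = d s x W) : d s x V = d s x U :=
  le_antisymm (d_antitone s x hUV) (h ▸ d_antitone s x hVW)

end

theorem extension_swap_inequality_general
    {X : Type*} [Fintype X] [DecidableEq X]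
    (s : X → Finset X → ℝ) (x y : X) (U : Finset X)
    (hxy : x ≠ y) (hx : x ∉ U)
    (hopt : d s x U = d s x (Finset.univ \ {x})) :
    d s y U + d s x (insert y U) ≥ d s x U + d s y (insert x U) := by
  have hyU : insert y U ⊆ Finset.univ \ {x} :=
    Finset.subset_sdiff.2 ⟨Finset.subset_univ _, by simp [hxy, hx]⟩
  have hx_stable : d s x (insert y U) = d s x U :=
    d_eq_of_subset_of_subset s x (Finset.subset_insert y U) hyU hopt
  have hy_drop : d s y (insert x U) ≤ d s y U := d_antitone s y (Finset.subset_insert x U)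
  linarith

/-- If `U` is a superset of an optimal parents set of `x`, then placing `x`
immediately after `U` costs no more than placing `y` first and `x` second:
`d y U + d x (U ∪ {y}) ≥ d x U + d y (U ∪ {x})`. -/
theorem extension_swap_inequality
    {X : Type*} [Fintype X] [DecidableEq X] [Nonempty X]
    (s : X → Finset X → ℝ) (x y : X) (U : Finset X)
    (hxy : x ≠ y) (hx : x ∉ U) (hy : y ∉ U)
    (hopt : d s x U = d s x (Finset.univ \ {x})) :
    d s y U + d s x (insert y U) ≥ d s x U + d s y (insert x U) :=
  extension_swap_inequality_general s x y U hxy hx hopt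
end

section
/- (Iterated optimal path extension, correctness of Algorithm 2.) Let P be a duplicate-free list of variables with element set U, and let x and y be distinct variables not in U such that both U is a superset of an optimal parents set of x (d(x, U) = d(x, univ \ {x})) and U is a superset of an optimal parents set of y (d(y, U) = d(y, univ \ {y})). Then the minimum of Q(L) over all duplicate-free enumerations L of all variables having prefix P equals the minimum of Q(L) over all duplicate-free enumerations having prefix P ++ [x] ++ [y]; in particular the path extension step may be applied repeatedly, extending U by x and then by y, without losing any optimal solution. -/
/-- `Qfrom s M U` : the cost of extending the lattice node `U` along the
ordering `M`, i.e. `Σ_k d(M_k, U ∪ S_k)` where `S_k` is the set of entries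
of `M` preceding position `k`. -/
noncomputable def Qfrom {X : Type*} [DecidableEq X] (s : X → Finset X → ℝ) :
    List X → Finset X → ℝ
  | [], _ => 0
  | x :: M, U => d s x U + Qfrom s M (insert x U)

/-- `Q s L` : the cost of the ordering `L`, i.e. `Σ_k d(L_k, S_k)` where
`S_k` is the set of entries of `L` preceding position `k`; this is the score
of the network in which each variable's parents are chosen optimally from
its predecessors in `L`. -/
noncomputable def Q {X : Type*} [DecidableEq X] (s : X → Finset X → ℝ)
    (L : List X) : ℝ :=
  Qfrom s L ∅

/-!
If `U` contains an optimal parent set of `x`, then `d x V = d x U` for every `V ⊇ U` avoiding `x`.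
Hence, in any ordering continuing from `U`, moving `x` to the front leaves the cost of `x` unchanged
while every variable it overtakes gains `x` as a candidate parent, which can only lower its cost.
Doing this for `x` and then for `y` turns every completion of `P` into one that continues with
`x, y` and costs no more.
-/

open Finset

section
variable {X : Type*} [DecidableEq X] (s : X → Finset X → ℝ)

theorem d_anti_s12 (x : X) : Antitone (d s x) := fun _ _ hUV =>
  le_inf' _ _ fun _ hW => inf'_le _ (mem_powerset.2 ((mem_powerset.1 hW).trans hUV))

theorem Qfrom_append (A B : List X) (U : Finset X) :
    Qfrom s (A ++ B) U = Qfrom s A U + Qfrom s B (U ∪ A.toFinset) := by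
  induction A generalizing U with
  | nil => simp [Qfrom]
  | cons a A ih =>
    rw [List.cons_append, Qfrom, Qfrom, ih, List.toFinset_cons, union_insert, insert_union]
    ring

theorem Q_append (A B : List X) : Q s (A ++ B) = Q s A + Qfrom s B A.toFinset := by
  rw [Q, Q, Qfrom_append, empty_union]

variable [Fintype X]

def ContainsOptimalParents (x : X) (U : Finset X) : Prop :=
  x ∉ U ∧ d s x U = d s x (univ \ {x})

variable {s}

theorem ContainsOptimalParents.insert_of_ne {x a : X} {U : Finset X}
    (h : ContainsOptimalParents s x U) (hax : a ≠ x) :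
    ContainsOptimalParents s x (insert a U) := by
  have hxaU : x ∉ insert a U := by simp [hax.symm, h.1]
  refine ⟨hxaU, le_antisymm ?_ (d_anti_s12 s x fun v hv => ?_)⟩
  · exact h.2 ▸ d_anti_s12 s x (subset_insert a U)
  · simpa using ne_of_mem_of_not_mem hv hxaU

theorem ContainsOptimalParents.Qfrom_cons_erase_le {x : X} {M : List X} (hxM : x ∈ M)
    {U : Finset X} (h : ContainsOptimalParents s x U) :
    Qfrom s (x :: M.erase x) U ≤ Qfrom s M U := by
  induction M generalizing U with
  | nil => cases hxM
  | cons a M ih =>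
    by_cases hax : a = x
    · subst hax
      rw [List.erase_cons_head]
    have hxM : x ∈ M := (List.mem_cons.1 hxM).resolve_left (Ne.symm hax)
    have haU := h.insert_of_ne hax
    have hdx : d s x (insert a U) = d s x U := haU.2.trans h.2.symm
    have hda : d s a (insert x U) ≤ d s a U := d_anti_s12 s a (subset_insert x U)
    have hrest := ih hxM haU
    rw [List.erase_cons_tail (by simpa using hax)]
    simp only [Qfrom] at hrest ⊢
    rw [insert_comm, hdx] at hrest
    linarith

theorem Qfrom_append_diff_le {E M : List X} (hE : E.Nodup) (hEM : E ⊆ M) {U : Finset X}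
    (h : ∀ e ∈ E, ContainsOptimalParents s e U) :
    Qfrom s (E ++ M.diff E) U ≤ Qfrom s M U := by
  induction E generalizing M U with
  | nil => simp
  | cons e E ih =>
    obtain ⟨heE, hE⟩ := List.nodup_cons.1 hE
    have hEM' : E ⊆ M.erase e := fun f hf =>
      (List.mem_erase_of_ne (ne_of_mem_of_not_mem hf heE)).2 (hEM (List.mem_cons_of_mem e hf))
    have h' : ∀ f ∈ E, ContainsOptimalParents s f (insert e U) := fun f hf =>
      (h f (List.mem_cons_of_mem e hf)).insert_of_ne (ne_of_mem_of_not_mem hf heE).symm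
    calc Qfrom s (e :: E ++ M.diff (e :: E)) U
        = d s e U + Qfrom s (E ++ (M.erase e).diff E) (insert e U) := by
          rw [List.diff_cons, List.cons_append, Qfrom]
      _ ≤ d s e U + Qfrom s (M.erase e) (insert e U) := by gcongr; exact ih hE hEM' h'
      _ ≤ Qfrom s M U :=
          (h e List.mem_cons_self).Qfrom_cons_erase_le (hEM List.mem_cons_self)

theorem exists_Q_le_of_prefix_append {P E L : List X} (hE : E.Nodup)
    (h : ∀ e ∈ E, ContainsOptimalParents s e P.toFinset)
    (hL : L.Nodup) (hLall : ∀ z : X, z ∈ L) (hPL : P <+: L) :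
    ∃ L' : List X, L'.Nodup ∧ (∀ z : X, z ∈ L') ∧ (P ++ E) <+: L' ∧ Q s L' ≤ Q s L := by
  obtain ⟨M, rfl⟩ := hPL
  have hEM : E ⊆ M := fun e he =>
    (List.mem_append.1 (hLall e)).resolve_left fun heP => (h e he).1 (List.mem_toFinset.2 heP)
  have hperm : (P ++ (E ++ M.diff E)).Perm (P ++ M) :=
    (List.subperm_append_diff_self_of_count_le (List.subperm_ext_iff.1 (hE.subperm hEM))).append_left P
  refine ⟨P ++ (E ++ M.diff E), hperm.nodup_iff.2 hL, fun z => hperm.mem_iff.2 (hLall z),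
    ⟨M.diff E, List.append_assoc _ _ _⟩, ?_⟩
  rw [Q_append, Q_append]
  gcongr
  exact Qfrom_append_diff_le hE hEM h

theorem sInf_Q_prefix_eq_sInf_Q_prefix_append {P E : List X} (hE : E.Nodup)
    (h : ∀ e ∈ E, ContainsOptimalParents s e P.toFinset) :
    sInf {r : ℝ | ∃ L : List X, L.Nodup ∧ (∀ z : X, z ∈ L) ∧ P <+: L ∧ Q s L = r} =
    sInf {r : ℝ | ∃ L : List X, L.Nodup ∧ (∀ z : X, z ∈ L) ∧ (P ++ E) <+: L ∧ Q s L = r} := by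
  refine csInf_eq_csInf_of_forall_exists_le ?_ ?_
  · rintro _ ⟨L, hL, hLall, hPL, rfl⟩
    obtain ⟨L', hL', hL'all, hPEL', hle⟩ := exists_Q_le_of_prefix_append hE h hL hLall hPL
    exact ⟨Q s L', ⟨L', hL', hL'all, hPEL', rfl⟩, hle⟩
  · rintro _ ⟨L, hL, hLall, hPEL, rfl⟩
    exact ⟨Q s L, ⟨L, hL, hLall, (List.prefix_append P E).trans hPEL, rfl⟩, le_rfl⟩

end

theorem iterated_path_extension_correct_general
    {X : Type*} [Fintype X] [DecidableEq X]
    (s : X → Finset X → ℝ) (P : List X) (x y : X)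
    (hxy : x ≠ y)
    (hx : x ∉ P.toFinset) (hy : y ∉ P.toFinset)
    (hoptx : d s x P.toFinset = d s x (Finset.univ \ {x}))
    (hopty : d s y P.toFinset = d s y (Finset.univ \ {y})) :
    sInf {r : ℝ | ∃ L : List X, L.Nodup ∧ (∀ z : X, z ∈ L) ∧
        P <+: L ∧ Q s L = r} =
    sInf {r : ℝ | ∃ L : List X, L.Nodup ∧ (∀ z : X, z ∈ L) ∧
        (P ++ [x] ++ [y]) <+: L ∧ Q s L = r} := by
  have hE : [x, y].Nodup := by simpa using hxy
  have h : ∀ e ∈ [x, y], ContainsOptimalParents s e P.toFinset := by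
    simpa using ⟨⟨hx, hoptx⟩, ⟨hy, hopty⟩⟩
  simpa using sInf_Q_prefix_eq_sInf_Q_prefix_append hE h

/-- Iterated optimal path extension (correctness of Algorithm 2): if the
prefix set `U = P.toFinset` is a superset of an optimal parents set of both
`x` and `y` (with `x ≠ y`, `x, y ∉ U`), then the minimum of `Q` over all
duplicate-free enumerations of all variables with prefix `P` equals the
minimum over those with prefix `P ++ [x] ++ [y]`. -/
theorem iterated_path_extension_correct
    {X : Type*} [Fintype X] [DecidableEq X] [Nonempty X]
    (s : X → Finset X → ℝ) (P : List X) (x y : X)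
    (hP : P.Nodup) (hxy : x ≠ y)
    (hx : x ∉ P.toFinset) (hy : y ∉ P.toFinset)
    (hoptx : d s x P.toFinset = d s x (Finset.univ \ {x}))
    (hopty : d s y P.toFinset = d s y (Finset.univ \ {y})) :
    sInf {r : ℝ | ∃ L : List X, L.Nodup ∧ (∀ z : X, z ∈ L) ∧
        P <+: L ∧ Q s L = r} =
    sInf {r : ℝ | ∃ L : List X, L.Nodup ∧ (∀ z : X, z ∈ L) ∧
        (P ++ [x] ++ [y]) <+: L ∧ Q s L = r} :=
  iterated_path_extension_correct_general s P x y hxy hx hy hoptx hopty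
end
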